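/- The co-size-based minimum-weight distance satisfies δ_cs(P,Q) = cs(P) + cs(Q) − 2·cs(P ⊔ Q) for all partitions P, Q of Fin n, where the co-size cs(P) is the number of two-block partitions coarser than P and δ_cs is the minimum-weight walk distance in the Hasse-diagram graph with edge weights given by differences of cs. -/

import Mathlib

open scoped BigOperators

/-- The Hasse-diagram graph of the partition lattice: `P` and `Q` are adjacent
iff one covers the other. -/
def hasse (n : ℕ) : SimpleGraph (Setoid (Fin n)) where
  Adj P Q := P ⋖ Q ∨ Q ⋖ P
  symm := ⟨fun P Q h => h.symm⟩
  loopless := ⟨fun P h => by cases h with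
    | inl h => exact lt_irrefl P h.lt
    | inr h => exact lt_irrefl P h.lt⟩

/-- The weight of an edge `{P,Q}` induced by `f`: `|f(P) - f(Q)|`. -/
noncomputable def eWeight {n : ℕ} (f : Setoid (Fin n) → ℝ) : Sym2 (Setoid (Fin n)) → ℝ :=
  Sym2.lift ⟨fun P Q => |f P - f Q|, fun P Q => abs_sub_comm (f P) (f Q)⟩

/-- The weight of a walk in the Hasse diagram: the sum of its edge weights. -/
noncomputable def walkWeight {n : ℕ} (f : Setoid (Fin n) → ℝ) {P Q : Setoid (Fin n)}
    (W : (hasse n).Walk P Q) : ℝ :=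
  (W.edges.map (eWeight f)).sum

/-- The minimum-`f`-weight distance `δ_f(P,Q)`: the minimum weight of a walk
from `P` to `Q` in the Hasse diagram. -/
noncomputable def deltaW {n : ℕ} (f : Setoid (Fin n) → ℝ) (P Q : Setoid (Fin n)) : ℝ :=
  sInf {w : ℝ | ∃ W : (hasse n).Walk P Q, walkWeight f W = w}

/-- Co-size of a partition: the number of two-block partitions (co-atoms)
coarser than `P`. -/
noncomputable def coSize (n : ℕ) (P : Setoid (Fin n)) : ℕ :=
  Set.ncard {R : Setoid (Fin n) | Nat.card (Quotient R) = 2 ∧ P ≤ R}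

/-!
`cs P` counts the elements of a fixed finite set lying above `P`, so it is antitone and satisfies
`cs P + cs (P' ⊔ Q) ≤ cs P' + cs (P ⊔ Q)` for `P' ≤ P` (as `Ici (P ⊔ Q) = Ici P ∩ Ici Q`).
Climbing a maximal chain from `P` to `P ⊔ Q` and descending to `Q` gives a walk of weight
`cs P + cs Q - 2 cs (P ⊔ Q)`, by telescoping. Conversely, for fixed `Q`, the quantity
`cs P + cs Q - 2 cs (P ⊔ Q)` changes by at most `|cs P - cs P'|` along an edge `{P, P'}` (by the
two inequalities above), so no walk is lighter.
-/

open Set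

instance Setoid.instFinite {α : Type*} [Finite α] : Finite (Setoid α) :=
  Finite.of_injective (⇑) fun _ _ h => Setoid.eq_iff_rel_eq.2 h

lemma Set.ncard_add_ncard_inter_le {β : Type*} {A A' : Set β} (hA' : A'.Finite) (h : A ⊆ A')
    (B : Set β) : A.ncard + (A' ∩ B).ncard ≤ A'.ncard + (A ∩ B).ncard := by
  have hA := ncard_inter_add_ncard_sdiff_eq_ncard A B (hA'.subset h)
  have hA'B := ncard_inter_add_ncard_sdiff_eq_ncard A' B hA'
  have hdiff : (A \ B).ncard ≤ (A' \ B).ncard := ncard_le_ncard (sdiff_subset_sdiff_left h) hA'.sdiff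
  omega

section CountAbove

variable {α : Type*} [SemilatticeSup α] {S : Set α}

lemma antitone_ncard_inter_Ici (hS : S.Finite) : Antitone fun P => (S ∩ Ici P).ncard :=
  fun _ _ h => ncard_le_ncard (inter_subset_inter_right _ (Ici_subset_Ici.2 h)) (hS.inter_of_left _)

lemma ncard_inter_Ici_add_le (hS : S.Finite) {P' P : α} (h : P' ≤ P) (Q : α) :
    (S ∩ Ici P).ncard + (S ∩ Ici (P' ⊔ Q)).ncard ≤
      (S ∩ Ici P').ncard + (S ∩ Ici (P ⊔ Q)).ncard := by
  simp only [← Ici_inter_Ici, ← inter_assoc]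
  exact ncard_add_ncard_inter_le (hS.inter_of_left _)
    (inter_subset_inter_right _ (Ici_subset_Ici.2 h)) _

end CountAbove

section Walks

variable {n : ℕ} {f : Setoid (Fin n) → ℝ}

@[simp]
lemma walkWeight_nil (P : Setoid (Fin n)) : walkWeight f (.nil : (hasse n).Walk P P) = 0 := by
  simp [walkWeight]

lemma walkWeight_cons {u v w : Setoid (Fin n)} (h : (hasse n).Adj u v) (W : (hasse n).Walk v w) :
    walkWeight f (.cons h W) = |f u - f v| + walkWeight f W := by
  simp [walkWeight, eWeight]

lemma walkWeight_append {u v w : Setoid (Fin n)} (W₁ : (hasse n).Walk u v)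
    (W₂ : (hasse n).Walk v w) : walkWeight f (W₁.append W₂) = walkWeight f W₁ + walkWeight f W₂ := by
  simp [walkWeight, SimpleGraph.Walk.edges_append]

lemma walkWeight_reverse {u v : Setoid (Fin n)} (W : (hasse n).Walk u v) :
    walkWeight f W.reverse = walkWeight f W := by
  simp [walkWeight, SimpleGraph.Walk.edges_reverse, List.sum_reverse]

lemma exists_walkWeight_eq_sub_of_le (hf : Antitone f) {P T : Setoid (Fin n)} (h : P ≤ T) :
    ∃ W : (hasse n).Walk P T, walkWeight f W = f P - f T := by
  induction P using WellFoundedGT.induction with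
  | _ P ih =>
  rcases h.eq_or_lt with rfl | hlt
  · exact ⟨.nil, by simp⟩
  · obtain ⟨R, hPR, hRT⟩ := exists_covBy_le_of_lt hlt
    obtain ⟨W, hW⟩ := ih R hPR.lt hRT
    refine ⟨.cons (show (hasse n).Adj P R from Or.inl hPR) W, ?_⟩
    rw [walkWeight_cons, hW, abs_of_nonneg (sub_nonneg.2 (hf hPR.le))]
    ring

lemma add_sub_two_mul_sup_le_walkWeight (hf : Antitone f)
    (hsuper : ∀ ⦃P' P : Setoid (Fin n)⦄, P' ≤ P → ∀ Q, f P + f (P' ⊔ Q) ≤ f P' + f (P ⊔ Q))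
    {P Q : Setoid (Fin n)} (W : (hasse n).Walk P Q) :
    f P + f Q - 2 * f (P ⊔ Q) ≤ walkWeight f W := by
  induction W with
  | nil => simp [two_mul]
  | @cons u v w huv W ih =>
    rw [walkWeight_cons]
    rcases huv with huv | hvu
    · have := hf (sup_le_sup_right huv.le w)
      rw [abs_of_nonneg (sub_nonneg.2 (hf huv.le))]
      linarith
    · have := hsuper hvu.le w
      rw [abs_sub_comm, abs_of_nonneg (sub_nonneg.2 (hf hvu.le))]
      linarith

theorem deltaW_eq_add_sub_two_mul_sup (hf : Antitone f)
    (hsuper : ∀ ⦃P' P : Setoid (Fin n)⦄, P' ≤ P → ∀ Q, f P + f (P' ⊔ Q) ≤ f P' + f (P ⊔ Q))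
    (P Q : Setoid (Fin n)) : deltaW f P Q = f P + f Q - 2 * f (P ⊔ Q) := by
  obtain ⟨WP, hWP⟩ := exists_walkWeight_eq_sub_of_le hf (le_sup_left : P ≤ P ⊔ Q)
  obtain ⟨WQ, hWQ⟩ := exists_walkWeight_eq_sub_of_le hf (le_sup_right : Q ≤ P ⊔ Q)
  refine IsLeast.csInf_eq ⟨⟨WP.append WQ.reverse, ?_⟩, ?_⟩
  · rw [walkWeight_append, walkWeight_reverse, hWP, hWQ]
    ring
  · rintro _ ⟨W, rfl⟩
    exact add_sub_two_mul_sup_le_walkWeight hf hsuper W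

end Walks

/-- The co-size-based minimum-weight distance satisfies
`δ_cs(P,Q) = cs(P) + cs(Q) - 2 cs(P ⊔ Q)`. -/
theorem deltaW_coSize (n : ℕ) (P Q : Setoid (Fin n)) :
    deltaW (fun R => (coSize n R : ℝ)) P Q =
      (coSize n P : ℝ) + (coSize n Q : ℝ) - 2 * (coSize n (P ⊔ Q) : ℝ) := by
  set S := {R : Setoid (Fin n) | Nat.card (Quotient R) = 2}
  have hcoSize : ∀ R, coSize n R = (S ∩ Ici R).ncard := fun _ => rfl
  apply deltaW_eq_add_sub_two_mul_sup
  · intro P' P h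
    simp only [hcoSize]
    exact_mod_cast antitone_ncard_inter_Ici S.toFinite h
  · intro P' P h Q
    simp only [hcoSize]
    exact_mod_cast ncard_inter_Ici_add_le S.toFinite h Q
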